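/- Let 2 ≤ p < ∞. There is a constant C = C(p) > 0 such that for every Schwartz function u : ℝ → ℂ and every integer λ ≥ 1, the rescaled function u_λ(x) := λ^{−1} u(λ^{−1} x) satisfies ‖u_λ‖_{M^{2,p}} ≤ C λ^{−1/p} ‖u‖_{M^{2,p}}. -/

import Mathlib

open MeasureTheory

/-- Fourier transform with normalization `û(ξ) = (2π)^{-1/2} ∫ e^{-ixξ} u(x) dx`. -/
noncomputable def ft (f : ℝ → ℂ) (ξ : ℝ) : ℂ :=
  (((2 * Real.pi) ^ (-(1 : ℝ) / 2) : ℝ) : ℂ) *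
    ∫ x : ℝ, Complex.exp (-Complex.I * x * ξ) * f x

/-- Modulation space norm `‖f‖_{M_s^{2,p}}` with `I_n = [n - 1/2, n + 1/2)`. -/
noncomputable def modNorm (p s : ℝ) (f : ℝ → ℂ) : ℝ :=
  (∑' n : ℤ, (1 + |(n : ℝ)|) ^ (s * p) *
      (∫ ξ in Set.Ico ((n : ℝ) - 1 / 2) ((n : ℝ) + 1 / 2), ‖ft f ξ‖ ^ 2) ^ (p / 2)) ^ (1 / p)

/-!
The Fourier transform of `u_λ` is `û(λ ·)`, so the `I_n`-block of `û_λ` carries `λ⁻¹` times the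
`L²`-mass of `û` on `λ I_n`, which is covered by the `2λ + 1` unit blocks `I_m` with
`λ(n - 1) ≤ m ≤ λ(n + 1)`. Writing `b_m = ‖û‖²_{L²(I_m)}` and `r = p/2 ≥ 1`, the power-mean
inequality gives `(λ⁻¹ ∑_m b_m)^r ≤ 3^(r-1) λ⁻¹ ∑_m b_m^r`, and every `m` lies in at most three
such windows, so summing over `n` yields `‖u_λ‖^p ≤ 3^r λ⁻¹ ‖u‖^p`.
-/

open Set Function Real FourierTransform

-- Mathlib's `𝓕` uses the kernel `e^{-2πixv}`.
lemma ft_eq_fourier (f : ℝ → ℂ) (ξ : ℝ) :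
    ft f ξ = ((2 * π) ^ (-(1 : ℝ) / 2) : ℝ) * 𝓕 f (ξ / (2 * π)) := by
  rw [ft, Real.fourier_eq']
  congr 1
  refine integral_congr_ae (Filter.Eventually.of_forall fun x => ?_)
  have hphase : -2 * π * inner ℝ x (ξ / (2 * π)) = -(x * ξ) := by
    simp only [RCLike.inner_apply, conj_trivial]
    field_simp
  simp only [hphase, smul_eq_mul]
  push_cast
  ring_nf

lemma integrable_norm_ft_sq (u : SchwartzMap ℝ ℂ) : Integrable (fun ξ => ‖ft u ξ‖ ^ 2) := by
  have hF := ((𝓕 u).memLp 2).integrable_norm_pow two_ne_zero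
  simp_rw [ft_eq_fourier, norm_mul, mul_pow]
  exact (hF.comp_div (by positivity)).const_mul _

lemma ft_comp_inv_mul (f : ℝ → ℂ) {a : ℝ} (ha : 0 < a) (ξ : ℝ) :
    ft (fun x => (a : ℂ)⁻¹ * f (a⁻¹ * x)) ξ = ft f (a * ξ) := by
  have ha' : (a : ℂ) ≠ 0 := by exact_mod_cast ha.ne'
  have hchange := Measure.integral_comp_inv_mul_left
    (fun y : ℝ => Complex.exp (-Complex.I * y * ↑(a * ξ)) * f y) a
  have hconst : (∫ x : ℝ, Complex.exp (-Complex.I * x * ξ) * ((a : ℂ)⁻¹ * f (a⁻¹ * x)))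
      = (a : ℂ)⁻¹ * ∫ x : ℝ, Complex.exp (-Complex.I * ↑(a⁻¹ * x) * ↑(a * ξ)) * f (a⁻¹ * x) := by
    rw [← integral_const_mul]
    congr 1 with x
    push_cast
    field_simp
  rw [ft, ft, hconst, hchange, abs_of_pos ha, Complex.real_smul, inv_mul_cancel_left₀ ha']

def unitBlock (n : ℤ) : Set ℝ := Ico ((n : ℝ) - 1 / 2) (n + 1 / 2)

lemma measurableSet_unitBlock (n : ℤ) : MeasurableSet (unitBlock n) := measurableSet_Ico

lemma mem_unitBlock_iff {ξ : ℝ} {n : ℤ} : ξ ∈ unitBlock n ↔ round ξ = n := by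
  rw [unitBlock, mem_Ico, round_eq, Int.floor_eq_iff]
  constructor <;> rintro ⟨h₁, h₂⟩ <;> constructor <;> linarith

lemma pairwise_disjoint_unitBlock : Pairwise (Disjoint on unitBlock) := fun _ _ hmn =>
  Set.disjoint_left.2 fun _ hm hn =>
    hmn ((mem_unitBlock_iff.1 hm).symm.trans (mem_unitBlock_iff.1 hn))

lemma iUnion_unitBlock : ⋃ n, unitBlock n = univ :=
  eq_univ_of_forall fun ξ => mem_iUnion.2 ⟨round ξ, mem_unitBlock_iff.2 rfl⟩

section BlockIntegrals

variable {f : ℝ → ℝ}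

lemma setIntegral_unitBlock_nonneg (hf₀ : 0 ≤ f) (n : ℤ) : 0 ≤ ∫ ξ in unitBlock n, f ξ :=
  setIntegral_nonneg (measurableSet_unitBlock n) fun ξ _ => hf₀ ξ

lemma hasSum_integral_unitBlock (hf : Integrable f) :
    HasSum (fun n => ∫ ξ in unitBlock n, f ξ) (∫ ξ, f ξ) := by
  have := hasSum_integral_iUnion measurableSet_unitBlock pairwise_disjoint_unitBlock
    (hf.integrableOn (s := ⋃ n, unitBlock n))
  rwa [iUnion_unitBlock, Measure.restrict_univ] at this

lemma setIntegral_le_sum_integral_unitBlock (hf₀ : 0 ≤ f) (hf : Integrable f)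
    {s : Set ℝ} {F : Finset ℤ} (hs : ∀ ξ ∈ s, round ξ ∈ F) :
    ∫ ξ in s, f ξ ≤ ∑ n ∈ F, ∫ ξ in unitBlock n, f ξ := by
  rw [← integral_biUnion_finset F (fun n _ => measurableSet_unitBlock n)
    (pairwise_disjoint_unitBlock.set_pairwise _) (fun n _ => hf.integrableOn)]
  refine setIntegral_mono_set hf.integrableOn (Filter.Eventually.of_forall hf₀)
    (Filter.Eventually.of_forall fun ξ hξ => ?_)
  exact mem_iUnion₂.2 ⟨round ξ, hs ξ hξ, mem_unitBlock_iff.2 rfl⟩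

lemma setIntegral_unitBlock_comp_mul {a : ℝ} (ha : 0 < a) (n : ℤ) :
    ∫ ξ in unitBlock n, f (a * ξ) =
      a⁻¹ * ∫ ξ in Ico (a * (n - 1 / 2)) (a * (n + 1 / 2)), f ξ := by
  simpa [LinearOrderedField.smul_Ico ha, unitBlock] using
    Measure.setIntegral_comp_smul_of_pos volume f (unitBlock n) ha

end BlockIntegrals

noncomputable def dilatedWindow (lam n : ℤ) : Finset ℤ := Finset.Icc (lam * (n - 1)) (lam * (n + 1))

section DilatedWindow

variable {lam : ℤ}

lemma round_mem_dilatedWindow (hlam : 1 ≤ lam) {n : ℤ} {ξ : ℝ}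
    (hξ : ξ ∈ Ico ((lam : ℝ) * (n - 1 / 2)) (lam * (n + 1 / 2))) :
    round ξ ∈ dilatedWindow lam n := by
  have hL : (1 : ℝ) ≤ lam := by exact_mod_cast hlam
  have hround := abs_le.1 (abs_sub_round ξ)
  obtain ⟨h₁, h₂⟩ := hξ
  rw [dilatedWindow, Finset.mem_Icc, ← Int.cast_le (R := ℝ), ← Int.cast_le (R := ℝ)]
  push_cast
  constructor <;> nlinarith

lemma card_dilatedWindow_le (hlam : 1 ≤ lam) (n : ℤ) :
    ((dilatedWindow lam n).card : ℝ) ≤ 3 * lam := by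
  rw [dilatedWindow, Int.card_Icc, show lam * (n + 1) + 1 - lam * (n - 1) = 2 * lam + 1 by ring]
  have h : (((2 * lam + 1).toNat : ℕ) : ℤ) ≤ 3 * lam := by omega
  exact_mod_cast h

lemma mem_Icc_ediv_of_mem_dilatedWindow (hlam : 1 ≤ lam) {m n : ℤ}
    (hm : m ∈ dilatedWindow lam n) : n ∈ Finset.Icc (m / lam - 1) (m / lam + 1) := by
  obtain ⟨h₁, h₂⟩ := Finset.mem_Icc.1 hm
  have hq₁ := Int.mul_ediv_self_le (x := m) (k := lam) (by omega)
  have hq₂ := Int.lt_mul_ediv_self_add (x := m) (k := lam) (by omega)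
  have hlo : n - 1 < m / lam + 1 := lt_of_mul_lt_mul_left (by linarith) (by omega : 0 ≤ lam)
  have hhi : m / lam ≤ n + 1 := le_of_mul_le_mul_left (by linarith) (by omega : 0 < lam)
  exact Finset.mem_Icc.2 ⟨by omega, by omega⟩

end DilatedWindow

lemma Summable.rpow_of_one_le {ι : Type*} {b : ι → ℝ} (hb₀ : 0 ≤ b) (hb : Summable b) {r : ℝ}
    (hr : 1 ≤ r) : Summable fun i => b i ^ r := by
  refine hb.of_norm_bounded_eventually ?_
  filter_upwards [hb.tendsto_cofinite_zero.eventually (ge_mem_nhds one_pos)] with i hi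
  rw [Real.norm_of_nonneg (Real.rpow_nonneg (hb₀ i) r)]
  exact Real.rpow_le_self_of_le_one (hb₀ i) hi hr

lemma tsum_le_mul_tsum_of_le_sum {ι κ : Type*} {t : ι → ℝ} {c : κ → ℝ} (S : ι → Finset κ)
    (T : κ → Finset ι) {k : ℕ} (ht₀ : 0 ≤ t) (hc₀ : 0 ≤ c) (hc : Summable c)
    (hST : ∀ i j, j ∈ S i → i ∈ T j) (hT : ∀ j, (T j).card ≤ k)
    (htc : ∀ i, t i ≤ ∑ j ∈ S i, c j) : ∑' i, t i ≤ k * ∑' j, c j := by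
  classical
  refine Real.tsum_le_of_sum_le ht₀ fun F => ?_
  have hmult : ∀ j, ((F.filter (j ∈ S ·)).card : ℝ) ≤ k := fun j => by
    exact_mod_cast (Finset.card_le_card fun i hi => hST i j (Finset.mem_filter.1 hi).2).trans (hT j)
  calc ∑ i ∈ F, t i
      ≤ ∑ i ∈ F, ∑ j ∈ S i, c j := Finset.sum_le_sum fun i _ => htc i
    _ = ∑ j ∈ F.biUnion S, ∑ i ∈ F with j ∈ S i, c j :=
        Finset.sum_comm' fun i j => by simp only [Finset.mem_biUnion, Finset.mem_filter]; aesop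
    _ ≤ ∑ j ∈ F.biUnion S, k * c j := Finset.sum_le_sum fun j _ => by
        rw [Finset.sum_const, nsmul_eq_mul]
        exact mul_le_mul_of_nonneg_right (hmult j) (hc₀ j)
    _ ≤ k * ∑' j, c j := by
        rw [← Finset.mul_sum]
        exact mul_le_mul_of_nonneg_left (hc.sum_le_tsum _ fun j _ => hc₀ j) (Nat.cast_nonneg k)

lemma rpow_inv_mul_sum_dilatedWindow_le {b : ℤ → ℝ} (hb₀ : 0 ≤ b) {r : ℝ} (hr : 1 ≤ r)
    {lam : ℤ} (hlam : 1 ≤ lam) (n : ℤ) :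
    ((lam : ℝ)⁻¹ * ∑ m ∈ dilatedWindow lam n, b m) ^ r ≤
      ∑ m ∈ dilatedWindow lam n, 3 ^ (r - 1) * (lam : ℝ)⁻¹ * b m ^ r := by
  have hL : (0 : ℝ) < lam := by exact_mod_cast hlam
  have hLr : (0 : ℝ) < (lam : ℝ) ^ r := Real.rpow_pos_of_pos hL r
  calc ((lam : ℝ)⁻¹ * ∑ m ∈ dilatedWindow lam n, b m) ^ r
      = ((lam : ℝ) ^ r)⁻¹ * (∑ m ∈ dilatedWindow lam n, b m) ^ r := by
        rw [Real.mul_rpow (inv_nonneg.2 hL.le) (Finset.sum_nonneg fun m _ => hb₀ m),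
          Real.inv_rpow hL.le]
    _ ≤ ((lam : ℝ) ^ r)⁻¹ * ((3 * lam) ^ (r - 1) * ∑ m ∈ dilatedWindow lam n, b m ^ r) := by
        gcongr
        refine (Real.rpow_sum_le_const_mul_sum_rpow_of_nonneg _ hr fun m _ => hb₀ m).trans ?_
        gcongr
        · exact Finset.sum_nonneg fun m _ => Real.rpow_nonneg (hb₀ m) r
        · exact card_dilatedWindow_le hlam n
    _ = ∑ m ∈ dilatedWindow lam n, 3 ^ (r - 1) * (lam : ℝ)⁻¹ * b m ^ r := by
        rw [← Finset.mul_sum, Real.mul_rpow (by norm_num) hL.le, Real.rpow_sub_one hL.ne']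
        field_simp

lemma tsum_rpow_le_of_le_inv_mul_sum_dilatedWindow {b t : ℤ → ℝ} {r : ℝ} {lam : ℤ}
    (hb₀ : 0 ≤ b) (hb : Summable fun m => b m ^ r) (ht₀ : 0 ≤ t) (hr : 1 ≤ r) (hlam : 1 ≤ lam)
    (htb : ∀ n, t n ≤ (lam : ℝ)⁻¹ * ∑ m ∈ dilatedWindow lam n, b m) :
    ∑' n, t n ^ r ≤ 3 ^ r * (lam : ℝ)⁻¹ * ∑' m, b m ^ r := by
  have hpointwise (n : ℤ) :
      t n ^ r ≤ ∑ m ∈ dilatedWindow lam n, 3 ^ (r - 1) * (lam : ℝ)⁻¹ * b m ^ r :=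
    (Real.rpow_le_rpow (ht₀ n) (htb n) (by linarith)).trans
      (rpow_inv_mul_sum_dilatedWindow_le hb₀ hr hlam n)
  calc ∑' n, t n ^ r ≤ (3 : ℕ) * ∑' m, 3 ^ (r - 1) * (lam : ℝ)⁻¹ * b m ^ r :=
        tsum_le_mul_tsum_of_le_sum _ (fun m => Finset.Icc (m / lam - 1) (m / lam + 1))
          (fun n => Real.rpow_nonneg (ht₀ n) r)
          (fun m => by have := Real.rpow_nonneg (hb₀ m) r; positivity) (hb.mul_left _)
          (fun n m hm => mem_Icc_ediv_of_mem_dilatedWindow hlam hm)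
          (fun m => by rw [Int.card_Icc]; omega) hpointwise
    _ = 3 ^ r * (lam : ℝ)⁻¹ * ∑' m, b m ^ r := by
        rw [tsum_mul_left, Real.rpow_sub_one (by norm_num : (3 : ℝ) ≠ 0)]
        push_cast
        ring

lemma tsum_integral_unitBlock_comp_mul_rpow_le {f : ℝ → ℝ} (hf₀ : 0 ≤ f) (hf : Integrable f)
    {r : ℝ} (hr : 1 ≤ r) {lam : ℤ} (hlam : 1 ≤ lam) :
    ∑' n, (∫ ξ in unitBlock n, f (lam * ξ)) ^ r ≤
      3 ^ r * (lam : ℝ)⁻¹ * ∑' m, (∫ ξ in unitBlock m, f ξ) ^ r := by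
  have hL : (0 : ℝ) < lam := by exact_mod_cast hlam
  have hb₀ := setIntegral_unitBlock_nonneg hf₀
  refine tsum_rpow_le_of_le_inv_mul_sum_dilatedWindow hb₀
    ((hasSum_integral_unitBlock hf).summable.rpow_of_one_le hb₀ hr)
    (setIntegral_unitBlock_nonneg fun ξ => hf₀ (lam * ξ)) hr hlam fun n => ?_
  rw [setIntegral_unitBlock_comp_mul hL]
  exact mul_le_mul_of_nonneg_left
    (setIntegral_le_sum_integral_unitBlock hf₀ hf fun ξ hξ => round_mem_dilatedWindow hlam hξ)
    (inv_nonneg.2 hL.le)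

lemma modNorm_zero_eq (p : ℝ) (f : ℝ → ℂ) :
    modNorm p 0 f = (∑' n, (∫ ξ in unitBlock n, ‖ft f ξ‖ ^ 2) ^ (p / 2)) ^ (1 / p) := by
  simp [modNorm, unitBlock]

theorem scaling_modulation_norm (p : ℝ) (hp : 2 ≤ p) :
    ∃ C : ℝ, 0 < C ∧ ∀ (u : SchwartzMap ℝ ℂ) (lam : ℤ), 1 ≤ lam →
      modNorm p 0 (fun x => ((lam : ℂ))⁻¹ * u (((lam : ℝ))⁻¹ * x)) ≤
        C * ((lam : ℝ)) ^ (-(1 / p)) * modNorm p 0 (fun x => u x) := by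
  refine ⟨3, by norm_num, fun u lam hlam => ?_⟩
  have hL : (0 : ℝ) < lam := by exact_mod_cast hlam
  have key := tsum_integral_unitBlock_comp_mul_rpow_le (fun ξ => sq_nonneg ‖ft u ξ‖)
    (integrable_norm_ft_sq u) (r := p / 2) (by linarith) hlam
  simp only [modNorm_zero_eq, ← Complex.ofReal_intCast, ft_comp_inv_mul _ hL]
  set B := ∑' m, (∫ ξ in unitBlock m, ‖ft u ξ‖ ^ 2) ^ (p / 2)
  have hB : 0 ≤ B := tsum_nonneg fun m =>
    Real.rpow_nonneg (setIntegral_unitBlock_nonneg (fun ξ => sq_nonneg _) m) _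
  calc _ ≤ (3 ^ (p / 2) * (lam : ℝ)⁻¹ * B) ^ (1 / p) :=
        Real.rpow_le_rpow (tsum_nonneg fun n =>
          Real.rpow_nonneg (setIntegral_unitBlock_nonneg (fun ξ => sq_nonneg _) n) _) key
          (by positivity)
    _ = (3 : ℝ) ^ (1 / 2 : ℝ) * (lam : ℝ) ^ (-(1 / p)) * B ^ (1 / p) := by
        rw [Real.mul_rpow (by positivity) hB, Real.mul_rpow (by positivity) (by positivity),
          ← Real.rpow_mul (by norm_num), Real.inv_rpow hL.le, ← Real.rpow_neg hL.le]
        congr 3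
        field_simp
    _ ≤ 3 * (lam : ℝ) ^ (-(1 / p)) * B ^ (1 / p) := by
        gcongr
        exact Real.rpow_le_self_of_one_le (by norm_num) (by norm_num)
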